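/- arXiv:1805.09401 — 8 statements merged into one kernel-verified Lean document; each statement's English description precedes it below -/
import Mathlib

section
/- For every real number q ≥ 2 and every real number α ≥ 0, one has q·α² + (α+1)² ≥ (1/2)·(2α+1)·(1 + √(4qα² + 1)). -/
/-- Normalized pointwise form of the Anderson–Chow estimate:
for `q ≥ 2` and `α ≥ 0`,
`q·α² + (α+1)² ≥ (1/2)·(2α+1)·(1 + √(4qα² + 1))`. -/
theorem anderson_chow_normalized (q α : ℝ) (hq : 2 ≤ q) (hα : 0 ≤ α) :
    q * α ^ 2 + (α + 1) ^ 2 ≥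
      (1 / 2) * (2 * α + 1) * (1 + Real.sqrt (4 * q * α ^ 2 + 1)) := by
  set S := Real.sqrt (4 * q * α ^ 2 + 1) with hSdef
  have hnn : (0:ℝ) ≤ 4 * q * α ^ 2 + 1 := by nlinarith [sq_nonneg α]
  have hS2 : S ^ 2 = 4 * q * α ^ 2 + 1 := Real.sq_sqrt hnn
  have hS0 : 0 ≤ S := Real.sqrt_nonneg _
  -- key: a := 2qα² + 2α² + 2α + 1 satisfies a ≥ (2α+1)S since a² - (2α+1)²S² = (2qα²-2α(α+1))² + 4α(α+1) ≥ 0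
  nlinarith [sq_nonneg (2*q*α^2 - 2*α*(α+1)), sq_nonneg (S - (2*α+1)),
    mul_nonneg hα (by linarith : (0:ℝ) ≤ α + 1), hS2, hS0,
    mul_nonneg hS0 hα, sq_nonneg (2*q*α^2 + 2*α^2 + 2*α + 1 - (2*α+1)*S)]
end

section
/- For every natural number q ≥ 2 and all real numbers K ≥ 0 and L ≥ 0, one has q²K² + q(K + (q−1)L)² ≥ ((2qK + q(q−1)L)/2) · ((q−1)L + √(4qK² + (q−1)²L²)). -/
/-- Pointwise Anderson–Chow estimate `|Rc|² ≥ R·Λ_Rm` for a warped product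
`ds² + u(s)·g_{S^q}` with nonnegative sectional curvatures `K` (mixed planes)
and `L` (spherical planes). -/
theorem anderson_chow_warped (q : ℕ) (hq : 2 ≤ q) (K L : ℝ) (hK : 0 ≤ K) (hL : 0 ≤ L) :
    (q : ℝ) ^ 2 * K ^ 2 + (q : ℝ) * (K + ((q : ℝ) - 1) * L) ^ 2 ≥
      ((2 * (q : ℝ) * K + (q : ℝ) * ((q : ℝ) - 1) * L) / 2) *
        (((q : ℝ) - 1) * L +
          Real.sqrt (4 * (q : ℝ) * K ^ 2 + ((q : ℝ) - 1) ^ 2 * L ^ 2)) := by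
  have hq2 : (2 : ℝ) ≤ (q : ℝ) := by exact_mod_cast hq
  set m : ℝ := ((q : ℝ) - 1) * L with hm_def
  have hm : 0 ≤ m := mul_nonneg (by linarith) hL
  have harg : 4 * (q : ℝ) * K ^ 2 + ((q : ℝ) - 1) ^ 2 * L ^ 2
      = 4 * (q : ℝ) * K ^ 2 + m ^ 2 := by rw [hm_def]; ring
  have harg0 : 0 ≤ 4 * (q : ℝ) * K ^ 2 + m ^ 2 := by positivity
  have h2Km : 0 ≤ 2 * K + m := by linarith
  have key : (2 * K + m) * Real.sqrt (4 * (q : ℝ) * K ^ 2 + m ^ 2)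
      ≤ 2 * (q : ℝ) * K ^ 2 + 2 * K ^ 2 + 2 * K * m + m ^ 2 := by
    have h1 : (2 * K + m) * Real.sqrt (4 * (q : ℝ) * K ^ 2 + m ^ 2)
        = Real.sqrt ((2 * K + m) ^ 2 * (4 * (q : ℝ) * K ^ 2 + m ^ 2)) := by
      rw [Real.sqrt_mul (by positivity), Real.sqrt_sq h2Km]
    rw [h1]
    have h2 : (2 * K + m) ^ 2 * (4 * (q : ℝ) * K ^ 2 + m ^ 2)
        ≤ (2 * (q : ℝ) * K ^ 2 + 2 * K ^ 2 + 2 * K * m + m ^ 2) ^ 2 := by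
      nlinarith [sq_nonneg (2 * (q : ℝ) * K ^ 2 - (2 * K ^ 2 + 2 * K * m + m ^ 2) + m ^ 2),
        sq_nonneg K, sq_nonneg m]
    calc Real.sqrt ((2 * K + m) ^ 2 * (4 * (q : ℝ) * K ^ 2 + m ^ 2))
        ≤ Real.sqrt ((2 * (q : ℝ) * K ^ 2 + 2 * K ^ 2 + 2 * K * m + m ^ 2) ^ 2) :=
          Real.sqrt_le_sqrt h2
      _ = 2 * (q : ℝ) * K ^ 2 + 2 * K ^ 2 + 2 * K * m + m ^ 2 :=
          Real.sqrt_sq (by nlinarith)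
  rw [harg]
  have hqpos : (0 : ℝ) < (q : ℝ) := by linarith
  have hcoef : (q : ℝ) * ((q : ℝ) - 1) * L = (q : ℝ) * m := by rw [hm_def]; ring
  rw [hcoef]
  set s : ℝ := Real.sqrt (4 * (q : ℝ) * K ^ 2 + m ^ 2) with hs_def
  nlinarith [mul_le_mul_of_nonneg_left key (le_of_lt hqpos)]
end

section
/- Let q ≥ 2 be a natural number and K ≥ 0, L ≥ 0 real numbers. If equality holds in the inequality q²K² + q(K + (q−1)L)² ≥ ((2qK + q(q−1)L)/2) · ((q−1)L + √(4qK² + (q−1)²L²)), then K = L or K = 0 or L = 0. -/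
/-- Equality case of the pointwise Anderson–Chow estimate for warped products:
if `|Rc|² = R·Λ_Rm` then either the sectional curvature is constant (`K = L`)
or one of the curvatures `K`, `L` vanishes. -/
theorem anderson_chow_equality (q : ℕ) (hq : 2 ≤ q) (K L : ℝ) (hK : 0 ≤ K) (hL : 0 ≤ L)
    (heq : (q : ℝ) ^ 2 * K ^ 2 + (q : ℝ) * (K + ((q : ℝ) - 1) * L) ^ 2 =
      ((2 * (q : ℝ) * K + (q : ℝ) * ((q : ℝ) - 1) * L) / 2) *
        (((q : ℝ) - 1) * L +
          Real.sqrt (4 * (q : ℝ) * K ^ 2 + ((q : ℝ) - 1) ^ 2 * L ^ 2))) :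
    K = L ∨ K = 0 ∨ L = 0 := by
  have hq2 : (2:ℝ) ≤ (q:ℝ) := by exact_mod_cast hq
  set Q : ℝ := (q:ℝ) with hQdef
  set S : ℝ := Real.sqrt (4 * Q * K ^ 2 + (Q - 1) ^ 2 * L ^ 2) with hSdef
  have harg : 0 ≤ 4 * Q * K ^ 2 + (Q - 1) ^ 2 * L ^ 2 := by positivity
  have hS2 : S ^ 2 = 4 * Q * K ^ 2 + (Q - 1) ^ 2 * L ^ 2 := Real.sq_sqrt harg
  rcases eq_or_lt_of_le hK with hK0 | hKpos
  · exact Or.inr (Or.inl hK0.symm)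
  rcases eq_or_lt_of_le hL with hL0 | hLpos
  · exact Or.inr (Or.inr hL0.symm)
  left
  have hQne : Q ≠ 0 := by intro h; rw [h] at hq2; linarith
  have key : (2 * K + (Q - 1) * L) * S =
      2 * (Q + 1) * K ^ 2 + 2 * K * ((Q - 1) * L) + ((Q - 1) * L) ^ 2 := by
    have h2 : Q * ((2 * K + (Q - 1) * L) * S) =
        Q * (2 * (Q + 1) * K ^ 2 + 2 * K * ((Q - 1) * L) + ((Q - 1) * L) ^ 2) := by
      linear_combination (-2 : ℝ) * heq
    exact mul_left_cancel₀ hQne h2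
  have key2 : (4 * K ^ 2) * ((Q - 1) * K - (Q - 1) * L) ^ 2 = 0 := by
    linear_combination
      (-(2 * (Q + 1) * K ^ 2 + 2 * K * ((Q - 1) * L) + ((Q - 1) * L) ^ 2)
        - (2 * K + (Q - 1) * L) * S) * key + (2 * K + (Q - 1) * L) ^ 2 * hS2
  have hK2 : (0:ℝ) < 4 * K ^ 2 := by positivity
  rcases mul_eq_zero.mp key2 with h | h
  · linarith
  · have hX : (Q - 1) * K - (Q - 1) * L = 0 := by
      exact pow_eq_zero_iff (two_ne_zero) |>.mp h
    have h1 : (Q - 1) * (K - L) = 0 := by linear_combination hX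
    rcases mul_eq_zero.mp h1 with h2 | h2
    · linarith
    · linarith
end

section
/- Let q ≥ 2 be a natural number and K ≥ 0, L ≥ 0 real numbers. For all real numbers b, λ₁, …, λ_q with b² + Σᵢ λᵢ² = 1, one has 2·K·b·(Σᵢ λᵢ) + L·((Σᵢ λᵢ)² − Σᵢ λᵢ²) ≤ ((q−1)L + √(4qK² + (q−1)²L²))/2, and this bound is attained for some admissible choice of b, λ₁, …, λ_q. -/
/-!
By Cauchy–Schwarz, `(∑ λᵢ)² ≤ q ∑ λᵢ²`; with `x = |b|` and `y = (∑ λᵢ²)^{1/2}` (so `x² + y² = 1`)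
this bounds `Rm[h, h]` by `2√q|K| x y + (q - 1) L y²`, the quadratic form of the symmetric matrix
`!![0, √q K; √q K, (q - 1) L]`, whose larger eigenvalue is the stated bound. Equality holds at an
eigenvector, realized with all `λᵢ` equal.
-/

open Finset Real

/-- The larger eigenvalue of the symmetric matrix `!![0, c; c, d]`. -/
noncomputable def topEigenvalue (c d : ℝ) : ℝ := (d + √(4 * c ^ 2 + d ^ 2)) / 2

namespace topEigenvalue

variable (c d : ℝ)

lemma abs_le_sqrt : |d| ≤ √(4 * c ^ 2 + d ^ 2) :=
  Real.abs_le_sqrt (by nlinarith [sq_nonneg c])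

lemma sq_eq : topEigenvalue c d ^ 2 = d * topEigenvalue c d + c ^ 2 := by
  have h := Real.sq_sqrt (show 0 ≤ 4 * c ^ 2 + d ^ 2 by positivity)
  unfold topEigenvalue
  linear_combination h / 4

lemma nonneg : 0 ≤ topEigenvalue c d := by
  have := abs_le_sqrt c d
  unfold topEigenvalue
  linarith [neg_abs_le d]

lemma le_self : d ≤ topEigenvalue c d := by
  have := abs_le_sqrt c d
  unfold topEigenvalue
  linarith [le_abs_self d]

lemma left_eq_zero (h : topEigenvalue c d = 0) : c = 0 := by
  have hsq := sq_eq c d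
  rw [h] at hsq
  exact pow_eq_zero_iff two_ne_zero |>.1 (by linear_combination -hsq)

lemma abs_left : topEigenvalue |c| d = topEigenvalue c d := by
  rw [topEigenvalue, sq_abs, topEigenvalue]

lemma sqrt_mul_left {q : ℝ} (hq : 0 ≤ q) (K : ℝ) :
    topEigenvalue (√q * K) d = (d + √(4 * q * K ^ 2 + d ^ 2)) / 2 := by
  rw [topEigenvalue, mul_pow, Real.sq_sqrt hq, mul_assoc]

lemma two_mul_mul_add_mul_sq_le (x y : ℝ) :
    2 * c * x * y + d * y ^ 2 ≤ topEigenvalue c d * (x ^ 2 + y ^ 2) := by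
  have hsq := sq_eq c d
  set M := topEigenvalue c d
  suffices 0 ≤ M * x ^ 2 - 2 * c * x * y + (M - d) * y ^ 2 by linarith
  rcases (show 0 ≤ M from nonneg c d).eq_or_lt with hM | hM
  · have hc := left_eq_zero c d hM.symm
    have hd : d ≤ 0 := hM ▸ le_self c d
    rw [← hM, hc]
    nlinarith [sq_nonneg y]
  · -- `M (M - d) = c²`, so the form is `(M x - c y)² / M`
    refine nonneg_of_mul_nonneg_right ?_ hM
    nlinarith [sq_nonneg (M * x - c * y)]

lemma exists_two_mul_mul_add_mul_sq_eq :
    ∃ x y : ℝ, x ^ 2 + y ^ 2 = 1 ∧ 2 * c * x * y + d * y ^ 2 = topEigenvalue c d := by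
  have hsq := sq_eq c d
  set M := topEigenvalue c d
  rcases (show 0 ≤ M from nonneg c d).eq_or_lt with hM | hM
  · exact ⟨1, 0, by norm_num, by rw [← hM, left_eq_zero c d hM.symm]; ring⟩
  · -- `(c, M)` is an eigenvector for `M`
    have hN : 0 < c ^ 2 + M ^ 2 := by positivity
    set N := √(c ^ 2 + M ^ 2)
    have hN2 : N ^ 2 = c ^ 2 + M ^ 2 := Real.sq_sqrt hN.le
    have hN0 : N ≠ 0 := (Real.sqrt_pos.2 hN).ne'
    refine ⟨c / N, M / N, ?_, ?_⟩
    · field_simp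
      exact hN2.symm
    · field_simp
      linear_combination -hN2 - hsq

end topEigenvalue

section WarpedProduct

variable {ι : Type*} [Fintype ι]

/-- `Rm[h, h]` for a unit symmetric 2-tensor `h` with `h₀₀ = b` and eigenvalues `lam` on the
sphere directions; `K` and `L` are the mixed and tangential sectional curvatures. -/
def curvatureForm (K L b : ℝ) (lam : ι → ℝ) : ℝ :=
  2 * K * b * (∑ i, lam i) + L * ((∑ i, lam i) ^ 2 - ∑ i, lam i ^ 2)

local notation "q" => (Fintype.card ι : ℝ)

lemma curvatureForm_le (K : ℝ) {L : ℝ} (hL : 0 ≤ L) (b : ℝ) (lam : ι → ℝ) :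
    curvatureForm K L b lam ≤
      2 * (√q * |K|) * |b| * √(∑ i, lam i ^ 2) + (q - 1) * L * √(∑ i, lam i ^ 2) ^ 2 := by
  set Q := ∑ i, lam i ^ 2
  have hQ : 0 ≤ Q := sum_nonneg fun i _ => sq_nonneg (lam i)
  have hCS : (∑ i, lam i) ^ 2 ≤ q * Q := by
    simpa using sq_sum_le_card_mul_sum_sq (s := univ) (f := lam)
  have hS : |∑ i, lam i| ≤ √q * √Q := by
    rw [← Real.sqrt_mul (Nat.cast_nonneg _)]
    exact Real.abs_le_sqrt hCS
  have hmixed : K * b * ∑ i, lam i ≤ |K| * |b| * (√q * √Q) := by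
    calc K * b * ∑ i, lam i ≤ |K * b * ∑ i, lam i| := le_abs_self _
      _ = |K| * |b| * |∑ i, lam i| := by rw [abs_mul, abs_mul]
      _ ≤ |K| * |b| * (√q * √Q) := by gcongr
  rw [Real.sq_sqrt hQ, curvatureForm]
  nlinarith [mul_le_mul_of_nonneg_left hCS hL]

lemma curvatureForm_le_topEigenvalue (K : ℝ) {L : ℝ} (hL : 0 ≤ L) {b : ℝ} {lam : ι → ℝ}
    (hunit : b ^ 2 + ∑ i, lam i ^ 2 = 1) :
    curvatureForm K L b lam ≤ topEigenvalue (√q * K) ((q - 1) * L) := by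
  set Q := ∑ i, lam i ^ 2
  calc curvatureForm K L b lam
      ≤ 2 * (√q * |K|) * |b| * √Q + (q - 1) * L * √Q ^ 2 := curvatureForm_le K hL b lam
    _ ≤ topEigenvalue (√q * |K|) ((q - 1) * L) * (|b| ^ 2 + √Q ^ 2) :=
        topEigenvalue.two_mul_mul_add_mul_sq_le _ _ _ _
    _ = topEigenvalue (√q * K) ((q - 1) * L) := by
        rw [sq_abs, Real.sq_sqrt (sum_nonneg fun i _ => sq_nonneg (lam i)), hunit, mul_one,
          ← topEigenvalue.abs_left (√q * K), abs_mul, abs_of_nonneg (Real.sqrt_nonneg q)]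

lemma curvatureForm_const (K L b t : ℝ) :
    curvatureForm K L b (fun _ : ι => t) =
      2 * (√q * K) * b * (√q * t) + (q - 1) * L * (√q * t) ^ 2 := by
  simp only [curvatureForm, sum_const, card_univ, nsmul_eq_mul]
  linear_combination
    -(2 * K * b * t + (q - 1) * L * t ^ 2) * Real.sq_sqrt (Nat.cast_nonneg (α := ℝ) (Fintype.card ι))

lemma exists_curvatureForm_eq_topEigenvalue [Nonempty ι] (K L : ℝ) :
    ∃ b : ℝ, ∃ lam : ι → ℝ, b ^ 2 + ∑ i, lam i ^ 2 = 1 ∧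
      curvatureForm K L b lam = topEigenvalue (√q * K) ((q - 1) * L) := by
  obtain ⟨x, y, hunit, hx⟩ :=
    topEigenvalue.exists_two_mul_mul_add_mul_sq_eq (√q * K) ((q - 1) * L)
  have hy : √q * (y / √q) = y :=
    mul_div_cancel₀ y (Real.sqrt_pos.2 (Nat.cast_pos.2 Fintype.card_pos)).ne'
  refine ⟨x, fun _ => y / √q, ?_, by rw [curvatureForm_const, hy, hx]⟩
  rw [sum_const, card_univ, nsmul_eq_mul, div_pow, Real.sq_sqrt (Nat.cast_nonneg _),
    mul_div_cancel₀ _ (Nat.cast_ne_zero.2 Fintype.card_ne_zero), hunit]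

end WarpedProduct

theorem lambda_Rm_warped_general (q : ℕ) (hq : 2 ≤ q) (K L : ℝ) (hL : 0 ≤ L) :
    (∀ b : ℝ, ∀ lam : Fin q → ℝ, b ^ 2 + ∑ i, lam i ^ 2 = 1 →
      2 * K * b * (∑ i, lam i) + L * ((∑ i, lam i) ^ 2 - ∑ i, lam i ^ 2) ≤
        (((q : ℝ) - 1) * L +
          Real.sqrt (4 * (q : ℝ) * K ^ 2 + ((q : ℝ) - 1) ^ 2 * L ^ 2)) / 2) ∧
    (∃ b : ℝ, ∃ lam : Fin q → ℝ, b ^ 2 + ∑ i, lam i ^ 2 = 1 ∧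
      2 * K * b * (∑ i, lam i) + L * ((∑ i, lam i) ^ 2 - ∑ i, lam i ^ 2) =
        (((q : ℝ) - 1) * L +
          Real.sqrt (4 * (q : ℝ) * K ^ 2 + ((q : ℝ) - 1) ^ 2 * L ^ 2)) / 2) := by
  have : Nonempty (Fin q) := ⟨⟨0, by omega⟩⟩
  have hbound : (((q : ℝ) - 1) * L + √(4 * (q : ℝ) * K ^ 2 + ((q : ℝ) - 1) ^ 2 * L ^ 2)) / 2 =
      topEigenvalue (√(Fintype.card (Fin q) : ℝ) * K) (((Fintype.card (Fin q) : ℝ) - 1) * L) := by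
    rw [Fintype.card_fin, topEigenvalue.sqrt_mul_left _ q.cast_nonneg, mul_pow]
  rw [hbound]
  exact ⟨fun b lam => curvatureForm_le_topEigenvalue K hL,
    exists_curvatureForm_eq_topEigenvalue K L⟩

/-- Largest eigenvalue `Λ_Rm` of the curvature operator of a nonnegatively
curved warped product `ds² + u(s)·g_{S^q}` acting on unit symmetric 2-tensors:
`Rm[h,h] = 2Kb(Σλᵢ) + L((Σλᵢ)² − Σλᵢ²)` is bounded by
`((q−1)L + √(4qK² + (q−1)²L²))/2` on the unit sphere `b² + Σλᵢ² = 1`,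
and the bound is attained. -/
theorem lambda_Rm_warped (q : ℕ) (hq : 2 ≤ q) (K L : ℝ) (hK : 0 ≤ K) (hL : 0 ≤ L) :
    (∀ b : ℝ, ∀ lam : Fin q → ℝ, b ^ 2 + ∑ i, lam i ^ 2 = 1 →
      2 * K * b * (∑ i, lam i) + L * ((∑ i, lam i) ^ 2 - ∑ i, lam i ^ 2) ≤
        (((q : ℝ) - 1) * L +
          Real.sqrt (4 * (q : ℝ) * K ^ 2 + ((q : ℝ) - 1) ^ 2 * L ^ 2)) / 2) ∧
    (∃ b : ℝ, ∃ lam : Fin q → ℝ, b ^ 2 + ∑ i, lam i ^ 2 = 1 ∧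
      2 * K * b * (∑ i, lam i) + L * ((∑ i, lam i) ^ 2 - ∑ i, lam i ^ 2) =
        (((q : ℝ) - 1) * L +
          Real.sqrt (4 * (q : ℝ) * K ^ 2 + ((q : ℝ) - 1) ^ 2 * L ^ 2)) / 2) :=
  lambda_Rm_warped_general q hq K L hL
end

section
/- Let μ > 0, a > 0, C₀ > 0, and let V₀ : (0, a) → (0, ∞) be differentiable with V₀(v) → 0 as v → 0⁺ and v·|V₀′(v)| ≤ C₀·V₀(v) for all v ∈ (0, a). Define V(u,t) = (1 + μt/u)·V₀(u + μt) and ν(t) = V₀(μt). Then for every ε > 0 there exist σ⁎ > 0, u⁎ > 0 and T⁎ > 0 with u⁎ + μ·T⁎ ≤ a such that for all u, t > 0 with t < T⁎, u + μt < u⁎ and u > σ⁎·t·ν(t), one has V(u,t) < ε. -/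
/-- Gronwall-type comparison: if `v·|V₀'(v)| ≤ C₀·V₀(v)` on `(0,a)`, then
`V₀(v)·v^(-C₀)` is antitone, so `V₀(w)·w^(-C₀) ≤ V₀(s)·s^(-C₀)` for `0 < s ≤ w < a`. -/
lemma V_small_productish_comp (a C₀ : ℝ) (hC₀ : 0 < C₀) (V₀ V₀' : ℝ → ℝ)
    (hderiv : ∀ v ∈ Set.Ioo (0 : ℝ) a, HasDerivAt V₀ (V₀' v) v)
    (hbound : ∀ v ∈ Set.Ioo (0 : ℝ) a, v * |V₀' v| ≤ C₀ * V₀ v)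
    (s w : ℝ) (hs : 0 < s) (hsw : s ≤ w) (hwa : w < a) :
    V₀ w * w ^ (-C₀) ≤ V₀ s * s ^ (-C₀) := by
  set f : ℝ → ℝ := fun v => V₀ v * v ^ (-C₀) with hf
  have hsub : Set.Icc s w ⊆ Set.Ioo (0 : ℝ) a := fun x hx =>
    ⟨lt_of_lt_of_le hs hx.1, lt_of_le_of_lt hx.2 hwa⟩
  have hderivf : ∀ v ∈ Set.Ioo (0 : ℝ) a,
      HasDerivAt f (V₀' v * v ^ (-C₀) + V₀ v * (-C₀ * v ^ (-C₀ - 1))) v := by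
    intro v hv
    have h1 : HasDerivAt (fun x : ℝ => x ^ (-C₀)) (-C₀ * v ^ (-C₀ - 1)) v :=
      Real.hasDerivAt_rpow_const (Or.inl hv.1.ne')
    exact (hderiv v hv).mul h1
  have hanti : AntitoneOn f (Set.Icc s w) := by
    apply antitoneOn_of_deriv_nonpos (convex_Icc s w)
    · intro x hx
      exact ((hderivf x (hsub hx)).continuousAt).continuousWithinAt
    · intro x hx
      rw [interior_Icc] at hx
      exact ((hderivf x (hsub ⟨hx.1.le, hx.2.le⟩)).differentiableAt).differentiableWithinAt
    · intro x hx
      rw [interior_Icc] at hx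
      have hxm : x ∈ Set.Ioo (0 : ℝ) a := hsub ⟨hx.1.le, hx.2.le⟩
      have hx0 : (0 : ℝ) < x := hxm.1
      rw [(hderivf x hxm).deriv]
      have key : x ^ (-C₀) = x ^ (-C₀ - 1) * x := by
        rw [← Real.rpow_add_one hx0.ne' (-C₀ - 1)]
        norm_num
      rw [key]
      have hb := hbound x hxm
      have h1 : x * V₀' x ≤ x * |V₀' x| :=
        mul_le_mul_of_nonneg_left (le_abs_self _) hx0.le
      have h2 : (0 : ℝ) < x ^ (-C₀ - 1) := Real.rpow_pos_of_pos hx0 _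
      have h3 : x * V₀' x - C₀ * V₀ x ≤ 0 := by linarith
      nlinarith [mul_nonpos_of_nonneg_of_nonpos h2.le h3]
  have := hanti (Set.left_mem_Icc.mpr hsw) (Set.right_mem_Icc.mpr hsw) hsw
  exact this

/-- Smallness of the productish approximate solution
`V(u,t) = (1 + μt/u)·V₀(u + μt)` in the productish region
`{u + μt < u⁎, u > σ⁎·t·ν(t)}`, where `ν(t) = V₀(μt)`. -/
theorem V_small_productish (μ a C₀ : ℝ) (hμ : 0 < μ) (ha : 0 < a) (hC₀ : 0 < C₀)
    (V₀ V₀' : ℝ → ℝ)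
    (hpos : ∀ v ∈ Set.Ioo (0 : ℝ) a, 0 < V₀ v)
    (hlim : Filter.Tendsto V₀ (nhdsWithin 0 (Set.Ioi 0)) (nhds 0))
    (hderiv : ∀ v ∈ Set.Ioo (0 : ℝ) a, HasDerivAt V₀ (V₀' v) v)
    (hbound : ∀ v ∈ Set.Ioo (0 : ℝ) a, v * |V₀' v| ≤ C₀ * V₀ v) :
    ∀ ε > (0 : ℝ), ∃ σstar > (0 : ℝ), ∃ ustar > (0 : ℝ), ∃ Tstar > (0 : ℝ),
      ustar + μ * Tstar ≤ a ∧
      ∀ u t : ℝ, 0 < u → 0 < t → t < Tstar → u + μ * t < ustar →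
        σstar * (t * V₀ (μ * t)) < u →
        (1 + μ * t / u) * V₀ (u + μ * t) < ε := by
  intro ε hε
  obtain ⟨δ, hδ, hδ'⟩ := Metric.tendsto_nhdsWithin_nhds.mp hlim (ε / 2) (by positivity)
  set P : ℝ := (2 : ℝ) ^ C₀ with hPdef
  have hP : 0 < P := Real.rpow_pos_of_pos two_pos C₀
  have hmδ : min δ a ≤ δ := min_le_left _ _
  have hma : min δ a ≤ a := min_le_right _ _
  have hm0 : 0 < min δ a := lt_min hδ ha
  refine ⟨4 * P * μ / ε, by positivity, min δ a / 2, by positivity,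
    (min δ a / 2) / (2 * μ), by positivity, ?_, ?_⟩
  · have h1 : μ * ((min δ a / 2) / (2 * μ)) = min δ a / 4 := by
      field_simp; ring
    rw [h1]; linarith
  · intro u t hu ht hTt hlt hσ
    set s : ℝ := μ * t with hsdef
    have hs : 0 < s := by positivity
    have hwa : u + s < a := by
      have : min δ a / 2 ≤ a := by linarith
      linarith
    have hwδ : u + s < δ := by
      have : min δ a / 2 ≤ δ := by linarith
      linarith
    have hsa : s < a := by linarith
    have hVs : 0 < V₀ s := hpos s ⟨hs, hsa⟩
    have hVw : 0 < V₀ (u + s) := hpos _ ⟨by positivity, hwa⟩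
    rcases le_or_gt s u with hcase | hcase
    · -- easy case: u ≥ s
      have hVsmall : V₀ (u + s) < ε / 2 := by
        have hmem : u + s ∈ Set.Ioi (0 : ℝ) := by
          simp only [Set.mem_Ioi]; positivity
        have hdist : dist (u + s) 0 < δ := by
          rw [Real.dist_eq, sub_zero, abs_of_pos (by positivity)]; exact hwδ
        have := hδ' hmem hdist
        rw [Real.dist_eq, sub_zero] at this
        calc V₀ (u + s) ≤ |V₀ (u + s)| := le_abs_self _
          _ < ε / 2 := this
      have h1 : s / u ≤ 1 := (div_le_one hu).mpr hcase
      have h2 : 1 + s / u ≤ 2 := by linarith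
      have h3 : (1 + s / u) * V₀ (u + s) ≤ 2 * V₀ (u + s) :=
        mul_le_mul_of_nonneg_right h2 hVw.le
      linarith
    · -- main case: u < s
      have hcomp := V_small_productish_comp a C₀ hC₀ V₀ V₀' hderiv hbound
        s (u + s) hs (by linarith) hwa
      have hub : (u + s) ^ C₀ ≤ (2 * s) ^ C₀ :=
        Real.rpow_le_rpow (by positivity) (by linarith) hC₀.le
      have h2s : (2 * s) ^ C₀ = P * s ^ C₀ := Real.mul_rpow (by norm_num) hs.le
      have hcancel : ∀ x : ℝ, 0 < x → x ^ (-C₀) * x ^ C₀ = 1 := by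
        intro x hx
        rw [← Real.rpow_add hx]; simp
      have hVwle : V₀ (u + s) ≤ P * V₀ s := by
        have hw0 : (0 : ℝ) < u + s := by positivity
        have e1 : V₀ (u + s) = (V₀ (u + s) * (u + s) ^ (-C₀)) * (u + s) ^ C₀ := by
          rw [mul_assoc, hcancel _ hw0, mul_one]
        rw [e1]
        calc (V₀ (u + s) * (u + s) ^ (-C₀)) * (u + s) ^ C₀
            ≤ (V₀ s * s ^ (-C₀)) * (u + s) ^ C₀ :=
              mul_le_mul_of_nonneg_right hcomp (Real.rpow_pos_of_pos hw0 _).le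
          _ ≤ (V₀ s * s ^ (-C₀)) * (P * s ^ C₀) := by
              apply mul_le_mul_of_nonneg_left (hub.trans h2s.le)
              positivity
          _ = P * V₀ s * (s ^ (-C₀) * s ^ C₀) := by ring
          _ = P * V₀ s := by rw [hcancel _ hs, mul_one]
      have key : 4 * P * s * V₀ s < u * ε := by
        rw [div_mul_eq_mul_div, div_lt_iff₀ hε] at hσ
        have : 4 * P * μ * (t * V₀ s) = 4 * P * s * V₀ s := by
          rw [hsdef]; ring
        nlinarith
      have e2 : 1 + s / u = (u + s) / u := by field_simp
      rw [e2, div_mul_eq_mul_div, div_lt_iff₀ hu]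
      calc (u + s) * V₀ (u + s) ≤ (u + s) * (P * V₀ s) :=
            mul_le_mul_of_nonneg_left hVwle (by positivity)
        _ < ε * u := by nlinarith [mul_pos hP hVs]
end

section
/- Let μ > 0, a > 0, C₀ > 0, and let V₀ : (0, a) → (0, ∞) be twice continuously differentiable with v·|V₀′(v)| ≤ C₀·V₀(v) and v²·|V₀″(v)| ≤ C₀·V₀(v) for all v ∈ (0, a). Set ν(t) = V₀(μt), V(u,t) = (1 + μt/u)·V₀(u + μt), and σ = u/(t·ν(t)). Then there is a constant C′ > 0, depending only on C₀ and μ, such that for all t > 0 and all u with 0 < u ≤ μt and u + μt < a, one has |V(u,t) − μ·σ⁻¹·(1 + μ⁻¹·(1 + t·ν′(t)/ν(t))·ν(t)·σ)| ≤ C′·μ·σ⁻¹·(ν(t)·σ)². -/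
/-- First-order expansion of the productish approximate solution near the tip:
`V = μσ⁻¹·(1 + (1 + ⟨ν⟩₁)·μ⁻¹·ν·σ + O((νσ)²))` for `0 < u ≤ μt`, where
`ν(t) = V₀(μt)`, `σ = u/(t·ν(t))`, and `⟨ν⟩₁ = t·ν′(t)/ν(t)`. -/
theorem V_tip_expansion (μ C₀ : ℝ) (hμ : 0 < μ) (hC₀ : 0 < C₀) :
    ∃ C' : ℝ, 0 < C' ∧
      ∀ a : ℝ, 0 < a → ∀ V₀ V₀' V₀'' : ℝ → ℝ,
        (∀ v ∈ Set.Ioo (0 : ℝ) a, 0 < V₀ v) →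
        (∀ v ∈ Set.Ioo (0 : ℝ) a, HasDerivAt V₀ (V₀' v) v) →
        (∀ v ∈ Set.Ioo (0 : ℝ) a, HasDerivAt V₀' (V₀'' v) v) →
        ContinuousOn V₀'' (Set.Ioo 0 a) →
        (∀ v ∈ Set.Ioo (0 : ℝ) a, v * |V₀' v| ≤ C₀ * V₀ v) →
        (∀ v ∈ Set.Ioo (0 : ℝ) a, v ^ 2 * |V₀'' v| ≤ C₀ * V₀ v) →
        ∀ t u : ℝ, 0 < t → 0 < u → u ≤ μ * t → u + μ * t < a →
          |(1 + μ * t / u) * V₀ (u + μ * t) -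
              μ * (u / (t * V₀ (μ * t)))⁻¹ *
                (1 + μ⁻¹ * (1 + t * (μ * V₀' (μ * t)) / V₀ (μ * t)) *
                  V₀ (μ * t) * (u / (t * V₀ (μ * t))))| ≤
            C' * (μ * (u / (t * V₀ (μ * t)))⁻¹) *
              (V₀ (μ * t) * (u / (t * V₀ (μ * t)))) ^ 2 := by
  refine ⟨C₀ * (1 + 2 * Real.exp C₀) / μ ^ 2, by positivity, ?_⟩
  intro a ha V₀ V₀' V₀'' hpos hd1 hd2 _hcont hb1 hb2 t u ht hu hum hua
  have hx0 : 0 < μ * t := by positivity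
  set s : Set ℝ := Set.Icc (μ * t) (μ * t + u) with hs
  have hsub : s ⊆ Set.Ioo (0 : ℝ) a := by
    intro v hv
    exact ⟨lt_of_lt_of_le hx0 hv.1, by have := hv.2; linarith⟩
  have hconv : Convex ℝ s := convex_Icc _ _
  have hxs : μ * t ∈ s := ⟨le_refl _, by linarith⟩
  have hys : μ * t + u ∈ s := ⟨by linarith, le_refl _⟩
  have hν : 0 < V₀ (μ * t) := hpos _ (hsub hxs)
  -- Step A: bound V₀ on s
  have hVbound : ∀ ξ ∈ s, V₀ ξ ≤ Real.exp C₀ * V₀ (μ * t) := by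
    intro ξ hξ
    have hlog : ∀ v ∈ s, HasDerivWithinAt (fun w => Real.log (V₀ w))
        ((V₀ v)⁻¹ * V₀' v) s v := by
      intro v hv
      exact ((Real.hasDerivAt_log (hpos v (hsub hv)).ne').comp v
        (hd1 v (hsub hv))).hasDerivWithinAt
    have hbd : ∀ v ∈ s, ‖(V₀ v)⁻¹ * V₀' v‖ ≤ C₀ / (μ * t) := by
      intro v hv
      have hv0 : 0 < v := (hsub hv).1
      have hVv : 0 < V₀ v := hpos v (hsub hv)
      have h1 : v * |V₀' v| ≤ C₀ * V₀ v := hb1 v (hsub hv)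
      have h2 : |V₀' v| ≤ C₀ * V₀ v / v := by
        rw [le_div_iff₀ hv0]; nlinarith [abs_nonneg (V₀' v)]
      rw [Real.norm_eq_abs, abs_mul, abs_inv, abs_of_pos hVv]
      calc (V₀ v)⁻¹ * |V₀' v| ≤ (V₀ v)⁻¹ * (C₀ * V₀ v / v) := by
            have : 0 ≤ (V₀ v)⁻¹ := by positivity
            exact mul_le_mul_of_nonneg_left h2 this
        _ = C₀ / v := by field_simp
        _ ≤ C₀ / (μ * t) := by
            apply div_le_div_of_nonneg_left hC₀.le hx0 hv.1
    have hmvt := hconv.norm_image_sub_le_of_norm_hasDerivWithin_le hlog hbd hxs hξ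
    have hξle : ‖ξ - μ * t‖ ≤ u := by
      rw [Real.norm_eq_abs, abs_of_nonneg (by linarith [hξ.1])]
      linarith [hξ.2]
    have hlogle : Real.log (V₀ ξ) - Real.log (V₀ (μ * t)) ≤ C₀ := by
      have h3 : ‖Real.log (V₀ ξ) - Real.log (V₀ (μ * t))‖ ≤ C₀ / (μ * t) * u := by
        calc ‖Real.log (V₀ ξ) - Real.log (V₀ (μ * t))‖
            ≤ C₀ / (μ * t) * ‖ξ - μ * t‖ := hmvt
          _ ≤ C₀ / (μ * t) * u := by
              exact mul_le_mul_of_nonneg_left hξle (by positivity)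
        
      have h4 : C₀ / (μ * t) * u ≤ C₀ := by
        rw [div_mul_eq_mul_div, div_le_iff₀ hx0]
        nlinarith
      have := (abs_le.mp ((Real.norm_eq_abs _ ▸ h3))).2
      linarith
    have hVξ : 0 < V₀ ξ := hpos ξ (hsub hξ)
    have : Real.log (V₀ ξ) ≤ Real.log (Real.exp C₀ * V₀ (μ * t)) := by
      rw [Real.log_mul (Real.exp_pos C₀).ne' hν.ne', Real.log_exp]
      linarith
    exact (Real.log_le_log_iff hVξ (by positivity)).mp this
  -- Step B/C: second derivative bound and MVT for V₀'
  set M : ℝ := C₀ * Real.exp C₀ * V₀ (μ * t) / (μ * t) ^ 2 with hM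
  have hM0 : 0 < M := by positivity
  have hd2bd : ∀ v ∈ s, ‖V₀'' v‖ ≤ M := by
    intro v hv
    have hv0 : 0 < v := (hsub hv).1
    have h1 : v ^ 2 * |V₀'' v| ≤ C₀ * V₀ v := hb2 v (hsub hv)
    have h2 : C₀ * V₀ v ≤ C₀ * (Real.exp C₀ * V₀ (μ * t)) :=
      mul_le_mul_of_nonneg_left (hVbound v hv) hC₀.le
    have hv2 : (μ * t) ^ 2 ≤ v ^ 2 := by nlinarith [hv.1]
    rw [Real.norm_eq_abs, hM]
    rw [le_div_iff₀ (by positivity : (0:ℝ) < (μ * t) ^ 2)]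
    nlinarith [abs_nonneg (V₀'' v), sq_nonneg v]
  have hmvt1 : ∀ ξ ∈ s, |V₀' ξ - V₀' (μ * t)| ≤ M * u := by
    intro ξ hξ
    have hD : ∀ v ∈ s, HasDerivWithinAt V₀' (V₀'' v) s v :=
      fun v hv => (hd2 v (hsub hv)).hasDerivWithinAt
    have := hconv.norm_image_sub_le_of_norm_hasDerivWithin_le hD hd2bd hxs hξ
    have hξle : ‖ξ - μ * t‖ ≤ u := by
      rw [Real.norm_eq_abs, abs_of_nonneg (by linarith [hξ.1])]
      linarith [hξ.2]
    calc |V₀' ξ - V₀' (μ * t)| ≤ M * ‖ξ - μ * t‖ := this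
      _ ≤ M * u := mul_le_mul_of_nonneg_left hξle hM0.le
  -- Step D: Taylor remainder bound
  have hg : |V₀ (μ * t + u) - V₀ (μ * t) - u * V₀' (μ * t)| ≤ M * u * u := by
    have hD : ∀ v ∈ s, HasDerivWithinAt
        (fun w => V₀ w - V₀ (μ * t) - (w - μ * t) * V₀' (μ * t))
        (V₀' v - V₀' (μ * t)) s v := by
      intro v hv
      have h1 : HasDerivAt (fun w => V₀ w - V₀ (μ * t) - (w - μ * t) * V₀' (μ * t))
          (V₀' v - 1 * V₀' (μ * t)) v := by
        exact ((hd1 v (hsub hv)).sub_const _).sub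
          (((hasDerivAt_id v).sub_const (μ * t)).mul_const _)
      simpa using h1.hasDerivWithinAt
    have hbd : ∀ v ∈ s, ‖V₀' v - V₀' (μ * t)‖ ≤ M * u :=
      fun v hv => hmvt1 v hv
    have := hconv.norm_image_sub_le_of_norm_hasDerivWithin_le hD hbd hxs hys
    simp only [Real.norm_eq_abs] at this
    have hnm : |(μ * t + u) - μ * t| = u := by
      rw [abs_of_nonneg (by linarith)]; ring
    rw [hnm] at this
    calc |V₀ (μ * t + u) - V₀ (μ * t) - u * V₀' (μ * t)|
        = |(V₀ (μ * t + u) - V₀ (μ * t) - (μ * t + u - μ * t) * V₀' (μ * t)) -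
            (V₀ (μ * t) - V₀ (μ * t) - (μ * t - μ * t) * V₀' (μ * t))| := by
          ring_nf
      _ ≤ M * u * u := by
          convert this using 2 <;> ring
  -- bound for V₀'(μt)
  have hν'bd : |V₀' (μ * t)| ≤ C₀ * V₀ (μ * t) / (μ * t) := by
    have h1 := hb1 _ (hsub hxs)
    rw [le_div_iff₀ hx0]
    nlinarith [abs_nonneg (V₀' (μ * t))]
  -- Step E: algebraic identity
  have hcomm : u + μ * t = μ * t + u := by ring
  have hid : (1 + μ * t / u) * V₀ (u + μ * t) -
      μ * (u / (t * V₀ (μ * t)))⁻¹ *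
        (1 + μ⁻¹ * (1 + t * (μ * V₀' (μ * t)) / V₀ (μ * t)) *
          V₀ (μ * t) * (u / (t * V₀ (μ * t)))) =
      u * V₀' (μ * t) + ((u + μ * t) / u) *
        (V₀ (u + μ * t) - V₀ (μ * t) - u * V₀' (μ * t)) := by
    field_simp
    ring
  rw [hid]
  have hg' : |V₀ (u + μ * t) - V₀ (μ * t) - u * V₀' (μ * t)| ≤ M * u * u := by
    rw [hcomm]; exact hg
  have habs : |u * V₀' (μ * t) + ((u + μ * t) / u) *
      (V₀ (u + μ * t) - V₀ (μ * t) - u * V₀' (μ * t))|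
      ≤ u * |V₀' (μ * t)| + ((u + μ * t) / u) *
        |V₀ (u + μ * t) - V₀ (μ * t) - u * V₀' (μ * t)| := by
    refine (abs_add_le _ _).trans ?_
    rw [abs_mul, abs_mul, abs_of_pos hu, abs_of_pos (by positivity : (0:ℝ) < (u + μ * t) / u)]
  refine habs.trans ?_
  have hstep : u * |V₀' (μ * t)| + ((u + μ * t) / u) *
      |V₀ (u + μ * t) - V₀ (μ * t) - u * V₀' (μ * t)|
      ≤ u * (C₀ * V₀ (μ * t) / (μ * t)) + ((μ * t + μ * t) / u) * (M * u * u) := by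
    gcongr
    all_goals first
      | exact hν'bd
      | exact hg'
      | positivity
      | exact abs_nonneg _
      | linarith
  refine hstep.trans (le_of_eq ?_)
  rw [hM]
  field_simp
  ring
end

section
/- Let μ > 0, a > 0, C₀ > 0, and let V₀, W₀ : (0, a) → (0, ∞) be twice continuously differentiable with v·|V₀′(v)| ≤ C₀·V₀(v), v·|W₀′(v)| ≤ C₀·W₀(v) and v²·|W₀″(v)| ≤ C₀·W₀(v) for all v ∈ (0, a). Set ν(t) = V₀(μt), ω(t) = W₀(μt), and σ = u/(t·ν(t)). Then there is a constant C′ > 0, depending only on C₀ and μ, such that for all t > 0 and all u with 0 < u ≤ μt and u + μt < a, one has |W₀(u + μt) − ω(t)·(1 + μ⁻¹·(t·ω′(t)/ω(t))·ν(t)·σ)| ≤ C′·ω(t)·(ν(t)·σ)². -/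
/-!
On `[x₀, 2x₀]` the bound `v |W₀'| ≤ C₀ W₀` makes `log W₀` vary by at most `C₀`, so
`W₀ ≤ e^{C₀} W₀(x₀)` there, and then `v² |W₀''| ≤ C₀ W₀` bounds `W₀''` by
`C₀ e^{C₀} W₀(x₀) / x₀²`. Taylor's formula at `x₀ = μt` with step `u ≤ x₀` gives the expansion,
since `ν σ = u / t` turns the error `u²/x₀²` into `(νσ)² / μ²`.
-/

open Real Set

theorem Convex.le_exp_mul_of_abs_deriv_le_mul {f f' : ℝ → ℝ} {s : Set ℝ} {K x y : ℝ}
    (hs : Convex ℝ s) (hpos : ∀ v ∈ s, 0 < f v) (hf : ∀ v ∈ s, HasDerivWithinAt f (f' v) s v)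
    (hbound : ∀ v ∈ s, |f' v| ≤ K * f v) (hx : x ∈ s) (hy : y ∈ s) :
    f y ≤ exp (K * |y - x|) * f x := by
  have hlog : |log (f y) - log (f x)| ≤ K * |y - x| := by
    simpa only [Real.norm_eq_abs] using hs.norm_image_sub_le_of_norm_hasDerivWithin_le
      (fun v hv => (hf v hv).log (hpos v hv).ne')
      (fun v hv => by
        rw [Real.norm_eq_abs, abs_div, abs_of_pos (hpos v hv), div_le_iff₀ (hpos v hv)]
        exact hbound v hv) hx hy
  calc f y = exp (log (f y) - log (f x)) * f x := by
        rw [exp_sub, exp_log (hpos y hy), exp_log (hpos x hx), div_mul_cancel₀ _ (hpos x hx).ne']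
    _ ≤ exp (K * |y - x|) * f x := by
        gcongr
        · exact (hpos x hx).le
        · exact (abs_le.mp hlog).2

theorem abs_sub_sub_deriv_mul_le_of_abs_deriv2_le {f f' f'' : ℝ → ℝ} {a b M : ℝ} (hab : a ≤ b)
    (hf : ∀ v ∈ Icc a b, HasDerivWithinAt f (f' v) (Icc a b) v)
    (hf' : ∀ v ∈ Icc a b, HasDerivWithinAt f' (f'' v) (Icc a b) v)
    (hM : ∀ v ∈ Icc a b, |f'' v| ≤ M) :
    |f b - f a - f' a * (b - a)| ≤ M * (b - a) ^ 2 := by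
  have ha : a ∈ Icc a b := left_mem_Icc.mpr hab
  have hb : b ∈ Icc a b := right_mem_Icc.mpr hab
  have hM₀ : 0 ≤ M := (abs_nonneg _).trans (hM a ha)
  have hslope : ∀ v ∈ Icc a b, |f' v - f' a| ≤ M * (b - a) := by
    intro v hv
    have hlip := (convex_Icc a b).norm_image_sub_le_of_norm_hasDerivWithin_le hf' hM ha hv
    rw [Real.norm_eq_abs, Real.norm_eq_abs, abs_of_nonneg (sub_nonneg.mpr hv.1)] at hlip
    exact hlip.trans (by gcongr; exact hv.2)
  have hrem := (convex_Icc a b).norm_image_sub_le_of_norm_hasDerivWithin_le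
    (f := fun v => f v - f' a * v) (f' := fun v => f' v - f' a)
    (fun v hv => by simpa using (hf v hv).fun_sub ((hasDerivWithinAt_id v _).const_mul (f' a)))
    hslope ha hb
  rw [Real.norm_eq_abs, Real.norm_eq_abs, abs_of_nonneg (sub_nonneg.mpr hab)] at hrem
  calc |f b - f a - f' a * (b - a)| = |f b - f' a * b - (f a - f' a * a)| := by ring_nf
    _ ≤ M * (b - a) * (b - a) := hrem
    _ = M * (b - a) ^ 2 := by ring

section DyadicInterval

variable {W W' W'' : ℝ → ℝ} {C x₀ b : ℝ}

theorem le_exp_mul_of_mul_abs_deriv_le (hC : 0 ≤ C) (hx₀ : 0 < x₀) (hb : b ≤ 2 * x₀)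
    (hpos : ∀ v ∈ Icc x₀ b, 0 < W v)
    (hW : ∀ v ∈ Icc x₀ b, HasDerivWithinAt W (W' v) (Icc x₀ b) v)
    (hW' : ∀ v ∈ Icc x₀ b, v * |W' v| ≤ C * W v) {c : ℝ} (hc : c ∈ Icc x₀ b) :
    W c ≤ exp C * W x₀ := by
  have hbound : ∀ v ∈ Icc x₀ b, |W' v| ≤ C / x₀ * W v := fun v hv => by
    rw [div_mul_eq_mul_div, le_div_iff₀ hx₀, mul_comm]
    exact (mul_le_mul_of_nonneg_right hv.1 (abs_nonneg _)).trans (hW' v hv)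
  have hx₀b : x₀ ∈ Icc x₀ b := ⟨le_rfl, hc.1.trans hc.2⟩
  have hdist : C / x₀ * |c - x₀| ≤ C := by
    rw [abs_of_nonneg (sub_nonneg.mpr hc.1), div_mul_eq_mul_div, div_le_iff₀ hx₀]
    exact mul_le_mul_of_nonneg_left (by linarith [hc.2]) hC
  calc W c ≤ exp (C / x₀ * |c - x₀|) * W x₀ :=
        (convex_Icc x₀ b).le_exp_mul_of_abs_deriv_le_mul hpos hW hbound hx₀b hc
    _ ≤ exp C * W x₀ := by gcongr; exact (hpos x₀ hx₀b).le

theorem abs_second_deriv_le_of_mul_abs_deriv_le (hC : 0 ≤ C) (hx₀ : 0 < x₀)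
    (hb : b ≤ 2 * x₀) (hpos : ∀ v ∈ Icc x₀ b, 0 < W v)
    (hW : ∀ v ∈ Icc x₀ b, HasDerivWithinAt W (W' v) (Icc x₀ b) v)
    (hW' : ∀ v ∈ Icc x₀ b, v * |W' v| ≤ C * W v)
    (hW'' : ∀ v ∈ Icc x₀ b, v ^ 2 * |W'' v| ≤ C * W v) {c : ℝ} (hc : c ∈ Icc x₀ b) :
    |W'' c| ≤ C * exp C * W x₀ / x₀ ^ 2 := by
  have hc₀ : 0 < c := hx₀.trans_le hc.1
  calc |W'' c| ≤ C * W c / c ^ 2 := by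
        rw [le_div_iff₀ (by positivity), mul_comm]; exact hW'' c hc
    _ ≤ C * W c / x₀ ^ 2 := by
        gcongr
        · exact mul_nonneg hC (hpos c hc).le
        · exact hc.1
    _ ≤ C * (exp C * W x₀) / x₀ ^ 2 := by
        gcongr; exact le_exp_mul_of_mul_abs_deriv_le hC hx₀ hb hpos hW hW' hc
    _ = C * exp C * W x₀ / x₀ ^ 2 := by ring

end DyadicInterval

/-- First-order expansion of the productish approximate solution for the
second warping factor near the tip:
`W₀(u + μt) = ω(t)·(1 + μ⁻¹·⟨ω⟩₁·ν·σ + O((νσ)²))` for `0 < u ≤ μt`, where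
`ν(t) = V₀(μt)`, `ω(t) = W₀(μt)`, `σ = u/(t·ν(t))`, `⟨ω⟩₁ = t·ω′(t)/ω(t)`. -/
theorem W_tip_expansion (μ C₀ : ℝ) (hμ : 0 < μ) (hC₀ : 0 < C₀) :
    ∃ C' : ℝ, 0 < C' ∧
      ∀ a : ℝ, 0 < a → ∀ V₀ V₀' V₀'' W₀ W₀' W₀'' : ℝ → ℝ,
        (∀ v ∈ Set.Ioo (0 : ℝ) a, 0 < V₀ v) →
        (∀ v ∈ Set.Ioo (0 : ℝ) a, 0 < W₀ v) →
        (∀ v ∈ Set.Ioo (0 : ℝ) a, HasDerivAt V₀ (V₀' v) v) →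
        (∀ v ∈ Set.Ioo (0 : ℝ) a, HasDerivAt V₀' (V₀'' v) v) →
        (∀ v ∈ Set.Ioo (0 : ℝ) a, HasDerivAt W₀ (W₀' v) v) →
        (∀ v ∈ Set.Ioo (0 : ℝ) a, HasDerivAt W₀' (W₀'' v) v) →
        ContinuousOn V₀'' (Set.Ioo 0 a) →
        ContinuousOn W₀'' (Set.Ioo 0 a) →
        (∀ v ∈ Set.Ioo (0 : ℝ) a, v * |V₀' v| ≤ C₀ * V₀ v) →
        (∀ v ∈ Set.Ioo (0 : ℝ) a, v * |W₀' v| ≤ C₀ * W₀ v) →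
        (∀ v ∈ Set.Ioo (0 : ℝ) a, v ^ 2 * |W₀'' v| ≤ C₀ * W₀ v) →
        ∀ t u : ℝ, 0 < t → 0 < u → u ≤ μ * t → u + μ * t < a →
          |W₀ (u + μ * t) -
              W₀ (μ * t) *
                (1 + μ⁻¹ * (t * (μ * W₀' (μ * t)) / W₀ (μ * t)) *
                  (V₀ (μ * t) * (u / (t * V₀ (μ * t)))))| ≤
            C' * W₀ (μ * t) * (V₀ (μ * t) * (u / (t * V₀ (μ * t)))) ^ 2 := by
  refine ⟨C₀ * exp C₀ / μ ^ 2, by positivity, ?_⟩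
  intro a _ V₀ _ _ W₀ W₀' W₀'' hVpos hWpos _ _ hW hW' _ _ _ hWb hW'b t u ht hu hux₀ hua
  set x₀ := μ * t
  have hx₀ : 0 < x₀ := by positivity
  have hsub : Icc x₀ (u + x₀) ⊆ Ioo 0 a := fun c hc => ⟨hx₀.trans_le hc.1, hc.2.trans_lt hua⟩
  have hb : u + x₀ ≤ 2 * x₀ := by linarith
  have hx₀a : x₀ ∈ Ioo 0 a := hsub ⟨le_rfl, by linarith⟩
  have hWderiv : ∀ v ∈ Icc x₀ (u + x₀), HasDerivWithinAt W₀ (W₀' v) (Icc x₀ (u + x₀)) v :=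
    fun v hv => (hW v (hsub hv)).hasDerivWithinAt
  have hTaylor := abs_sub_sub_deriv_mul_le_of_abs_deriv2_le (by linarith) hWderiv
    (fun v hv => (hW' v (hsub hv)).hasDerivWithinAt)
    (fun _ hc => abs_second_deriv_le_of_mul_abs_deriv_le hC₀.le hx₀ hb
      (fun v hv => hWpos v (hsub hv)) hWderiv (fun v hv => hWb v (hsub hv))
      (fun v hv => hW'b v (hsub hv)) hc)
  have hV₀ := (hVpos x₀ hx₀a).ne'
  have hW₀ := (hWpos x₀ hx₀a).ne'
  have hlinear : W₀ x₀ * (1 + μ⁻¹ * (t * (μ * W₀' x₀) / W₀ x₀) * (V₀ x₀ * (u / (t * V₀ x₀))))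
      = W₀ x₀ + W₀' x₀ * u := by
    field_simp
  have hquadratic : C₀ * exp C₀ / μ ^ 2 * W₀ x₀ * (V₀ x₀ * (u / (t * V₀ x₀))) ^ 2
      = C₀ * exp C₀ * W₀ x₀ / x₀ ^ 2 * u ^ 2 := by
    field_simp
    ring
  rw [hlinear, hquadratic, ← sub_sub]
  simpa only [add_sub_cancel_right] using hTaylor
end

section
/- Let μ > 0, a ∈ ℝ, C₀ > 0, and let Z₀ : (0, ∞) → (0, ∞) be twice differentiable with v·|Z₀′(v)| ≤ C₀·Z₀(v) and v²·|Z₀″(v)| ≤ C₀·Z₀(v) for all v > 0. Define Z(u, t) = ((u + μt)/u)^a · Z₀(u + μt) for u, t > 0. Then there is a constant C > 0, depending only on a and C₀, such that for all u, t > 0, u·|∂ᵤZ(u,t)| + u²·|∂ᵤ²Z(u,t)| ≤ C·Z(u,t). -/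
/-!
Write `m = μt`. On `(0, ∞)` the approximate solution factors as
`x ^ (-a) · G(x + m)` with `G(v) = v ^ a · Z₀(v)`. Positive functions `F` on `(0, ∞)` with
`x |F'| ≤ K F` and `x² |F''| ≤ K F` contain the powers `x ^ b`, are closed under products by the
Leibniz rule, and under shifts `x ↦ F(x + m)` with `m ≥ 0`, because `x ≤ x + m`.
-/

open Topology

/-- The paper's `|⟨F⟩₁| ≤ K` and `|⟨F⟩₂| ≤ K` on `(0, ∞)`. -/
structure ScaledDerivBounded (K : ℝ) (f : ℝ → ℝ) : Prop where
  pos : ∀ x, 0 < x → 0 < f x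
  differentiableAt : ∀ x, 0 < x → DifferentiableAt ℝ f x
  differentiableAt_deriv : ∀ x, 0 < x → DifferentiableAt ℝ (deriv f) x
  deriv_le : ∀ x, 0 < x → x * |deriv f x| ≤ K * f x
  deriv_deriv_le : ∀ x, 0 < x → x ^ 2 * |deriv (deriv f) x| ≤ K * f x

namespace ScaledDerivBounded

variable {K L : ℝ} {f g : ℝ → ℝ}

theorem of_hasDerivAt {f' f'' : ℝ → ℝ} (hpos : ∀ x, 0 < x → 0 < f x)
    (hf : ∀ x, 0 < x → HasDerivAt f (f' x) x) (hf' : ∀ x, 0 < x → HasDerivAt f' (f'' x) x)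
    (h₁ : ∀ x, 0 < x → x * |f' x| ≤ K * f x) (h₂ : ∀ x, 0 < x → x ^ 2 * |f'' x| ≤ K * f x) :
    ScaledDerivBounded K f := by
  have hderiv : ∀ x, 0 < x → deriv f =ᶠ[𝓝 x] f' := fun x hx => by
    filter_upwards [Ioi_mem_nhds hx] with y hy using (hf y hy).deriv
  have hderiv2 : ∀ x, 0 < x → HasDerivAt (deriv f) (f'' x) x := fun x hx =>
    (hf' x hx).congr_of_eventuallyEq (hderiv x hx)
  refine ⟨hpos, fun x hx => (hf x hx).differentiableAt,
    fun x hx => (hderiv2 x hx).differentiableAt, fun x hx => ?_, fun x hx => ?_⟩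
  · simpa only [(hf x hx).deriv] using h₁ x hx
  · simpa only [(hderiv2 x hx).deriv] using h₂ x hx

theorem nonneg (hf : ScaledDerivBounded K f) : 0 ≤ K := by
  nlinarith [hf.deriv_le 1 one_pos, hf.pos 1 one_pos, abs_nonneg (deriv f 1)]

theorem congr (hf : ScaledDerivBounded K f) (hfg : ∀ x, 0 < x → f x = g x) :
    ScaledDerivBounded K g := by
  refine of_hasDerivAt (f' := deriv f) (f'' := deriv (deriv f))
    (fun x hx => hfg x hx ▸ hf.pos x hx) (fun x hx => ?_)
    (fun x hx => (hf.differentiableAt_deriv x hx).hasDerivAt)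
    (fun x hx => hfg x hx ▸ hf.deriv_le x hx) (fun x hx => hfg x hx ▸ hf.deriv_deriv_le x hx)
  have hgf : g =ᶠ[𝓝 x] f := by
    filter_upwards [Ioi_mem_nhds hx] with y hy using (hfg y hy).symm
  exact (hf.differentiableAt x hx).hasDerivAt.congr_of_eventuallyEq hgf

theorem comp_add_const (hf : ScaledDerivBounded K f) {m : ℝ} (hm : 0 ≤ m) :
    ScaledDerivBounded K (fun x => f (x + m)) := by
  have hxm : ∀ x, 0 < x → 0 < x + m := fun x hx => by linarith
  refine of_hasDerivAt (f' := fun x => deriv f (x + m))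
    (f'' := fun x => deriv (deriv f) (x + m)) (fun x hx => hf.pos _ (hxm x hx))
    (fun x hx => ((hf.differentiableAt _ (hxm x hx)).hasDerivAt).comp_add_const x m)
    (fun x hx => ((hf.differentiableAt_deriv _ (hxm x hx)).hasDerivAt).comp_add_const x m)
    (fun x hx => ?_) (fun x hx => ?_)
  · calc x * |deriv f (x + m)| ≤ (x + m) * |deriv f (x + m)| := by gcongr; linarith
      _ ≤ K * f (x + m) := hf.deriv_le _ (hxm x hx)
  · calc x ^ 2 * |deriv (deriv f) (x + m)| ≤ (x + m) ^ 2 * |deriv (deriv f) (x + m)| := by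
          gcongr; linarith
      _ ≤ K * f (x + m) := hf.deriv_deriv_le _ (hxm x hx)

theorem mul (hf : ScaledDerivBounded K f) (hg : ScaledDerivBounded L g) :
    ScaledDerivBounded (K + L + 2 * K * L) (fun x => f x * g x) := by
  have hKL : 0 ≤ K * L := mul_nonneg hf.nonneg hg.nonneg
  refine of_hasDerivAt (f' := fun x => deriv f x * g x + f x * deriv g x)
    (f'' := fun x => deriv (deriv f) x * g x + 2 * (deriv f x * deriv g x)
      + f x * deriv (deriv g) x)
    (fun x hx => mul_pos (hf.pos x hx) (hg.pos x hx))
    (fun x hx => (hf.differentiableAt x hx).hasDerivAt.mul (hg.differentiableAt x hx).hasDerivAt)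
    (fun x hx => ?_) (fun x hx => ?_) (fun x hx => ?_)
  · refine (((hf.differentiableAt_deriv x hx).hasDerivAt.mul
      (hg.differentiableAt x hx).hasDerivAt).add ((hf.differentiableAt x hx).hasDerivAt.mul
      (hg.differentiableAt_deriv x hx).hasDerivAt)).congr_deriv ?_
    ring
  · have hfx := hf.pos x hx
    have hgx := hg.pos x hx
    have habs : |deriv f x * g x + f x * deriv g x| ≤ |deriv f x| * g x + f x * |deriv g x| := by
      simpa only [abs_mul, abs_of_pos hfx, abs_of_pos hgx] using
        abs_add_le (deriv f x * g x) (f x * deriv g x)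
    calc x * |deriv f x * g x + f x * deriv g x|
        ≤ (x * |deriv f x|) * g x + f x * (x * |deriv g x|) := by nlinarith
      _ ≤ (K * f x) * g x + f x * (L * g x) := by
          gcongr ?_ * _ + _ * ?_
          exacts [hf.deriv_le x hx, hg.deriv_le x hx]
      _ ≤ (K + L + 2 * K * L) * (f x * g x) := by nlinarith [mul_pos hfx hgx]
  · have hfx := hf.pos x hx
    have hgx := hg.pos x hx
    have habs : |deriv (deriv f) x * g x + 2 * (deriv f x * deriv g x) + f x * deriv (deriv g) x|
        ≤ |deriv (deriv f) x| * g x + 2 * (|deriv f x| * |deriv g x|)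
          + f x * |deriv (deriv g) x| := by
      simpa only [abs_mul, abs_two, abs_of_pos hfx, abs_of_pos hgx] using
        abs_add_three (deriv (deriv f) x * g x) (2 * (deriv f x * deriv g x))
          (f x * deriv (deriv g) x)
    calc x ^ 2 * |deriv (deriv f) x * g x + 2 * (deriv f x * deriv g x)
          + f x * deriv (deriv g) x|
        ≤ (x ^ 2 * |deriv (deriv f) x|) * g x + 2 * ((x * |deriv f x|) * (x * |deriv g x|))
          + f x * (x ^ 2 * |deriv (deriv g) x|) := by nlinarith
      _ ≤ (K * f x) * g x + 2 * ((K * f x) * (L * g x)) + f x * (L * g x) := by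
          have := hf.nonneg
          gcongr ?_ * _ + 2 * (?_ * ?_) + _ * ?_
          exacts [hf.deriv_deriv_le x hx, hf.deriv_le x hx, hg.deriv_le x hx,
            hg.deriv_deriv_le x hx]
      _ ≤ (K + L + 2 * K * L) * (f x * g x) := by nlinarith [mul_pos hfx hgx]

end ScaledDerivBounded

theorem scaledDerivBounded_rpow (b : ℝ) :
    ScaledDerivBounded (|b| + |b * (b - 1)|) (fun x => x ^ b) := by
  refine .of_hasDerivAt (f' := fun x => b * x ^ (b - 1))
    (f'' := fun x => b * ((b - 1) * x ^ (b - 1 - 1))) (fun x hx => Real.rpow_pos_of_pos hx b)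
    (fun x hx => Real.hasDerivAt_rpow_const (Or.inl hx.ne'))
    (fun x hx => (Real.hasDerivAt_rpow_const (Or.inl hx.ne')).const_mul b)
    (fun x hx => ?_) (fun x hx => ?_)
  · have hxb := Real.rpow_pos_of_pos hx b
    have : x * |b * x ^ (b - 1)| = |b| * x ^ b := by
      rw [Real.rpow_sub_one hx.ne', abs_mul, abs_of_pos (div_pos hxb hx)]
      field_simp
    rw [this]
    nlinarith [abs_nonneg (b * (b - 1))]
  · have hxb := Real.rpow_pos_of_pos hx b
    have : x ^ 2 * |b * ((b - 1) * x ^ (b - 1 - 1))| = |b * (b - 1)| * x ^ b := by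
      rw [Real.rpow_sub_one hx.ne', Real.rpow_sub_one hx.ne', ← mul_assoc, abs_mul,
        abs_of_pos (div_pos (div_pos hxb hx) hx)]
      field_simp
    rw [this]
    nlinarith [abs_nonneg b]

theorem exists_scaledDerivBounded_div_rpow_mul_comp_add_const (a : ℝ) {C₀ : ℝ} (hC₀ : 0 < C₀) :
    ∃ K, 0 < K ∧ ∀ m, 0 ≤ m → ∀ Z₀ : ℝ → ℝ, ScaledDerivBounded C₀ Z₀ →
      ScaledDerivBounded K (fun x => ((x + m) / x) ^ a * Z₀ (x + m)) := by
  refine ⟨_, ?_, fun m hm Z₀ hZ₀ => ((scaledDerivBounded_rpow (-a)).mul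
    (((scaledDerivBounded_rpow a).mul hZ₀).comp_add_const hm)).congr fun x hx => ?_⟩
  · positivity
  · rw [Real.div_rpow (by linarith) hx.le, Real.rpow_neg hx.le]
    ring

/-- The approximate solution `Z(u,t) = ((u + μt)/u)^a · Z₀(u + μt)` inherits
the scaled derivative bounds of its initial data:
`u·|∂ᵤZ| + u²·|∂ᵤ²Z| ≤ C·Z` with `C` depending only on `a` and `C₀`. -/
theorem approximate_solution_regularity (a C₀ : ℝ) (hC₀ : 0 < C₀) :
    ∃ C : ℝ, 0 < C ∧
      ∀ μ : ℝ, 0 < μ → ∀ Z₀ Z₀' Z₀'' : ℝ → ℝ,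
        (∀ v : ℝ, 0 < v → 0 < Z₀ v) →
        (∀ v : ℝ, 0 < v → HasDerivAt Z₀ (Z₀' v) v) →
        (∀ v : ℝ, 0 < v → HasDerivAt Z₀' (Z₀'' v) v) →
        (∀ v : ℝ, 0 < v → v * |Z₀' v| ≤ C₀ * Z₀ v) →
        (∀ v : ℝ, 0 < v → v ^ 2 * |Z₀'' v| ≤ C₀ * Z₀ v) →
        ∀ u t : ℝ, 0 < u → 0 < t →
          u * |deriv (fun x => ((x + μ * t) / x) ^ a * Z₀ (x + μ * t)) u| +
              u ^ 2 *
                |deriv (deriv (fun x => ((x + μ * t) / x) ^ a * Z₀ (x + μ * t))) u| ≤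
            C * (((u + μ * t) / u) ^ a * Z₀ (u + μ * t)) := by
  obtain ⟨K, hK, hZ⟩ := exists_scaledDerivBounded_div_rpow_mul_comp_add_const a hC₀
  refine ⟨2 * K, by positivity, fun μ hμ Z₀ Z₀' Z₀'' hpos hd1 hd2 hb1 hb2 u t hu ht => ?_⟩
  have hZ₀ : ScaledDerivBounded C₀ Z₀ := .of_hasDerivAt hpos hd1 hd2 hb1 hb2
  have hZ := hZ (μ * t) (by positivity) Z₀ hZ₀
  linarith [hZ.deriv_le u hu, hZ.deriv_deriv_le u hu]
end
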